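/- Let d ≥ 1 and δ > 0. Let a₁, a₂ > 0 and b₁, b₂ ≥ 0 be constants and u a unit vector in ℝ^d. Then the function h ↦ b₁ (1 + a₁‖h‖²)^{−δ} + 2δ b₂ (1 + a₂‖h‖²)^{−δ−1} − 4δ(δ+1) b₂ a₂ ⟨h,u⟩² (1 + a₂‖h‖²)^{−δ−2} is a stationary covariance function on ℝ^d. (This is the derivative-based construction T⁽³⁾ applied to two Cauchy models C_δ, written in closed form.) -/

import Mathlib

/-! The Cauchy model is a Gamma mixture of Gaussians,
`(1 + a r²)^(-δ) = Γ(δ)⁻¹ ∫₀^∞ s^(δ-1) e^(-s) e^(-s a r²) ds`, and Gaussians are positive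
definite: `e^(-c‖x - y‖²) = e^(-c‖x‖²) e^(-c‖y‖²) e^(2c⟪x, y⟫)`, and the exponential series
expands `e^(2c⟪x, y⟫)` into the positive definite kernels `⟪x, y⟫^m`.

With `C h = (1 + a₂‖h‖²)^(-δ)`, the `b₂`-part of the function is `-(b₂ / a₂)` times the
second derivative of `t ↦ C (h + t u)` at `0`, i.e. the limit of
`(2 C h - C (h + ε u) - C (h - ε u)) / ε²` as `ε → 0⁺`. Each of these quotients is positive
definite, being the covariance of the increments `X (x + ε u) - X x` of a field `X` with
covariance `C`; positive definiteness is preserved by nonnegative combinations and pointwise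
limits. -/

open MeasureTheory
open scoped BigOperators RealInnerProductSpace

noncomputable section

/-- A function `C : ℝ^d → ℝ` is a stationary covariance function if it is
positive semidefinite. -/
def IsStationaryCovariance (d : ℕ) (C : EuclideanSpace ℝ (Fin d) → ℝ) : Prop :=
  ∀ (n : ℕ) (x : Fin n → EuclideanSpace ℝ (Fin d)) (v : Fin n → ℝ),
    0 ≤ ∑ i, ∑ j, v i * v j * C (x i - x j)

/-- `φ : [0,∞) → ℝ` belongs to the class `Φ_d`. -/
def MemPhi (d : ℕ) (φ : ℝ → ℝ) : Prop :=
  ContinuousOn φ (Set.Ici 0) ∧ IsStationaryCovariance d (fun h => φ ‖h‖)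

/-- `f` is a `d`-radial spectral density of `φ`. -/
def IsRadialSpectralDensity (d : ℕ) (φ f : ℝ → ℝ) : Prop :=
  (∀ u : ℝ, 0 ≤ u → 0 ≤ f u) ∧
  MeasureTheory.Integrable (fun ω : EuclideanSpace ℝ (Fin d) => f ‖ω‖) ∧
  ∀ h : EuclideanSpace ℝ (Fin d),
    (φ ‖h‖ : ℂ) = ∫ ω : EuclideanSpace ℝ (Fin d),
      Complex.exp (Complex.I * ((⟪h, ω⟫ : ℝ) : ℂ)) * ((f ‖ω‖ : ℝ) : ℂ)

/-- The quadratic form `hᵀ A h`. -/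
def quadForm {d : ℕ} (A : Matrix (Fin d) (Fin d) ℝ) (h : EuclideanSpace ℝ (Fin d)) : ℝ :=
  ∑ i, ∑ j, h i * A i j * h j

open Filter Topology Set
open scoped Nat

variable {d : ℕ}

namespace IsStationaryCovariance

variable {C C' : EuclideanSpace ℝ (Fin d) → ℝ}

lemma sum_nonneg (hC : IsStationaryCovariance d C) {ι : Type*} [Fintype ι]
    (x : ι → EuclideanSpace ℝ (Fin d)) (v : ι → ℝ) :
    0 ≤ ∑ i, ∑ j, v i * v j * C (x i - x j) := by
  let e := (Fintype.equivFin ι).symm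
  refine (hC _ (x ∘ e) (v ∘ e)).trans_eq ?_
  exact Fintype.sum_equiv e _ _ fun i => Fintype.sum_equiv e _ _ fun j => rfl

lemma add (hC : IsStationaryCovariance d C) (hC' : IsStationaryCovariance d C') :
    IsStationaryCovariance d (fun h => C h + C' h) := fun n x v => by
  simpa only [mul_add, Finset.sum_add_distrib] using add_nonneg (hC n x v) (hC' n x v)

lemma const_mul (hC : IsStationaryCovariance d C) {c : ℝ} (hc : 0 ≤ c) :
    IsStationaryCovariance d (fun h => c * C h) := fun n x v => by
  simpa only [Finset.mul_sum, mul_left_comm c] using mul_nonneg hc (hC n x v)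

lemma of_tendsto {ι : Type*} {l : Filter ι} [l.NeBot] {F : ι → EuclideanSpace ℝ (Fin d) → ℝ}
    (hF : ∀ᶠ k in l, IsStationaryCovariance d (F k))
    (hlim : ∀ h, Tendsto (fun k => F k h) l (𝓝 (C h))) :
    IsStationaryCovariance d C := fun n x v =>
  ge_of_tendsto
    (tendsto_finsetSum _ fun _ _ => tendsto_finsetSum _ fun _ _ => (hlim _).const_mul _)
    (hF.mono fun _ hk => hk n x v)

lemma integral {α : Type*} [MeasurableSpace α] {μ : Measure α}
    {F : α → EuclideanSpace ℝ (Fin d) → ℝ}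
    (hF : ∀ᵐ s ∂μ, IsStationaryCovariance d (F s))
    (hint : ∀ h, Integrable (fun s => F s h) μ) :
    IsStationaryCovariance d (fun h => ∫ s, F s h ∂μ) := fun n x v => by
  have hswap : ∑ i, ∑ j, v i * v j * ∫ s, F s (x i - x j) ∂μ
      = ∫ s, ∑ i, ∑ j, v i * v j * F s (x i - x j) ∂μ := by
    rw [integral_finsetSum _ fun _ _ => integrable_finsetSum _ fun _ _ => (hint _).const_mul _]
    simp only [integral_finsetSum _ fun _ _ => (hint _).const_mul _, integral_const_mul]
  rw [hswap]
  exact integral_nonneg_of_ae (hF.mono fun s hs => hs n x v)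

lemma second_difference (hC : IsStationaryCovariance d C) (w : EuclideanSpace ℝ (Fin d)) :
    IsStationaryCovariance d (fun h => 2 * C h - C (h + w) - C (h - w)) := fun n x v => by
  have := hC.sum_nonneg (Sum.elim x fun i => x i + w) (Sum.elim v fun i => -v i)
  simp only [Fintype.sum_sum_type, Sum.elim_inl, Sum.elim_inr] at this
  refine this.trans_eq ?_
  simp only [← Finset.sum_add_distrib]
  refine Finset.sum_congr rfl fun i _ => Finset.sum_congr rfl fun j _ => ?_
  rw [show x i - (x j + w) = x i - x j - w by abel, show x i + w - x j = x i - x j + w by abel,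
    add_sub_add_right_eq_sub]
  ring

end IsStationaryCovariance

lemma sum_mul_mul_inner_pow_nonneg {ι : Type*} [Fintype ι]
    (x : ι → EuclideanSpace ℝ (Fin d)) (w : ι → ℝ) (m : ℕ) :
    0 ≤ ∑ i, ∑ j, w i * w j * ⟪x i, x j⟫ ^ m := by
  have hexpand : ∀ i j, w i * w j * ⟪x i, x j⟫ ^ m
      = ∑ p : Fin m → Fin d, (w i * ∏ t, x i (p t)) * (w j * ∏ t, x j (p t)) := by
    intro i j
    simp only [PiLp.inner_apply, RCLike.inner_apply, conj_trivial, Fintype.sum_pow,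
      Finset.mul_sum, Finset.prod_mul_distrib]
    refine Finset.sum_congr rfl fun p _ => ?_
    ring
  calc 0 ≤ ∑ p : Fin m → Fin d, (∑ i, w i * ∏ t, x i (p t)) ^ 2 := by positivity
    _ = _ := by
      simp only [hexpand, sq, Finset.sum_mul_sum]
      rw [Finset.sum_comm]
      exact Finset.sum_congr rfl fun i _ => Finset.sum_comm

lemma isStationaryCovariance_gaussian {c : ℝ} (hc : 0 ≤ c) :
    IsStationaryCovariance d (fun h => Real.exp (-c * ‖h‖ ^ 2)) := fun n x v => by
  set w : Fin n → ℝ := fun i => v i * Real.exp (-c * ‖x i‖ ^ 2)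
  have hsplit : ∀ i j, v i * v j * Real.exp (-c * ‖x i - x j‖ ^ 2)
      = w i * w j * Real.exp (2 * c * ⟪x i, x j⟫) := by
    intro i j
    have : -c * ‖x i - x j‖ ^ 2 = -c * ‖x i‖ ^ 2 + -c * ‖x j‖ ^ 2 + 2 * c * ⟪x i, x j⟫ := by
      rw [norm_sub_sq_real]
      ring
    rw [this, Real.exp_add, Real.exp_add]
    ring
  have hseries : HasSum (fun m : ℕ => (2 * c) ^ m / m ! * ∑ i, ∑ j, w i * w j * ⟪x i, x j⟫ ^ m)
      (∑ i, ∑ j, v i * v j * Real.exp (-c * ‖x i - x j‖ ^ 2)) := by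
    simp only [hsplit, Finset.mul_sum]
    refine hasSum_sum fun i _ => hasSum_sum fun j _ => ?_
    have hterm : (fun m : ℕ => (2 * c) ^ m / m ! * (w i * w j * ⟪x i, x j⟫ ^ m))
        = fun m => w i * w j * ((2 * c * ⟪x i, x j⟫) ^ m / m !) := by
      funext m
      ring
    rw [hterm]
    refine HasSum.mul_left _ ?_
    rw [Real.exp_eq_exp_ℝ]
    exact NormedSpace.expSeries_div_hasSum_exp _
  exact hseries.nonneg fun m => mul_nonneg (by positivity) (sum_mul_mul_inner_pow_nonneg x w m)

open Real in
lemma isStationaryCovariance_cauchy {δ a : ℝ} (hδ : 0 < δ) (ha : 0 ≤ a) :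
    IsStationaryCovariance d (fun h => (1 + a * ‖h‖ ^ 2) ^ (-δ)) := by
  have hexp : ∀ (h : EuclideanSpace ℝ (Fin d)) (s : ℝ),
      s ^ (δ - 1) * exp (-s) * exp (-(s * a) * ‖h‖ ^ 2)
        = s ^ (δ - 1) * exp (-((1 + a * ‖h‖ ^ 2) * s)) := by
    intro h s
    rw [mul_assoc, ← exp_add]
    ring_nf
  have hmix : (fun h : EuclideanSpace ℝ (Fin d) => (1 + a * ‖h‖ ^ 2) ^ (-δ))
      = fun h => (Gamma δ)⁻¹ *
          ∫ s in Ioi 0, s ^ (δ - 1) * exp (-s) * exp (-(s * a) * ‖h‖ ^ 2) := by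
    funext h
    have hr : 0 < 1 + a * ‖h‖ ^ 2 := by positivity
    simp only [hexp, integral_rpow_mul_exp_neg_mul_Ioi hδ hr, one_div, inv_rpow hr.le,
      rpow_neg hr.le]
    field_simp [(Gamma_pos_of_pos hδ).ne']
  rw [hmix]
  refine (IsStationaryCovariance.integral ?_ fun h => ?_).const_mul
    (inv_nonneg.2 (Gamma_pos_of_pos hδ).le)
  · filter_upwards [ae_restrict_mem measurableSet_Ioi] with s (hs : 0 < s)
    exact (isStationaryCovariance_gaussian (by positivity)).const_mul (by positivity)
  · have hr : 0 < 1 + a * ‖h‖ ^ 2 := by positivity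
    have := integrableOn_rpow_mul_exp_neg_mul_rpow (by linarith : -1 < δ - 1) one_pos hr
    simp only [rpow_one, neg_mul] at this
    simp only [hexp]
    exact this

lemma tendsto_second_difference_quotient {g g' : ℝ → ℝ} {L : ℝ}
    (hg : ∀ t, HasDerivAt g (g' t) t) (hg' : HasDerivAt g' L 0) :
    Tendsto (fun ε => (g ε + g (-ε) - 2 * g 0) / ε ^ 2) (𝓝[>] 0) (𝓝 L) := by
  have hright : Tendsto (fun ε => ε⁻¹ * (g' ε - g' 0)) (𝓝[>] 0) (𝓝 L) := by
    simpa using hg'.tendsto_slope_zero_right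
  have hleft : Tendsto (fun ε => (-ε)⁻¹ * (g' (-ε) - g' 0)) (𝓝[>] 0) (𝓝 L) := by
    have := hg'.tendsto_slope_zero_left.comp (tendsto_neg_nhdsGT_neg (a := 0))
    simpa [Function.comp_def] using this
  -- one application of l'Hôpital's rule leaves the average of the two one-sided slopes of `g'`
  have hquot : Tendsto (fun ε => (g' ε + g' (-ε) * -1) / (↑2 * ε ^ (2 - 1))) (𝓝[>] 0) (𝓝 L) := by
    have := (hright.add hleft).div_const 2
    rw [add_self_div_two] at this
    refine this.congr' ?_
    filter_upwards [self_mem_nhdsWithin] with ε (hε : 0 < ε)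
    field_simp
    ring
  have hcont : Continuous g := continuous_iff_continuousAt.2 fun t => (hg t).continuousAt
  refine HasDerivAt.lhopital_zero_nhdsGT
    (Eventually.of_forall fun ε => (((hg ε).add ((hg (-ε)).comp ε (hasDerivAt_neg ε))).sub_const _))
    (Eventually.of_forall fun ε => hasDerivAt_pow 2 ε) ?_ ?_ ?_ hquot
  · filter_upwards [self_mem_nhdsWithin] with ε hε
    exact mul_ne_zero two_ne_zero (pow_ne_zero _ (ne_of_gt hε))
  · have : Continuous fun ε => g ε + g (-ε) - 2 * g 0 := by fun_prop
    exact (this.tendsto' 0 0 (by simp only [neg_zero]; ring)).mono_left nhdsWithin_le_nhds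
  · exact ((continuous_pow 2).tendsto' 0 0 (by simp)).mono_left nhdsWithin_le_nhds

lemma tendsto_cauchy_second_difference_quotient (δ : ℝ) {a : ℝ} (ha : 0 ≤ a)
    (h u : EuclideanSpace ℝ (Fin d)) :
    Tendsto (fun ε : ℝ => ((1 + a * ‖h + ε • u‖ ^ 2) ^ (-δ) + (1 + a * ‖h - ε • u‖ ^ 2) ^ (-δ)
        - 2 * (1 + a * ‖h‖ ^ 2) ^ (-δ)) / ε ^ 2) (𝓝[>] 0)
      (𝓝 (4 * δ * (δ + 1) * a ^ 2 * ⟪h, u⟫ ^ 2 * (1 + a * ‖h‖ ^ 2) ^ (-δ - 2)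
        - 2 * δ * a * ‖u‖ ^ 2 * (1 + a * ‖h‖ ^ 2) ^ (-δ - 1))) := by
  set q : ℝ → ℝ := fun t => 1 + a * ‖h + t • u‖ ^ 2
  set q' : ℝ → ℝ := fun t => a * (2 * ⟪h, u⟫ + 2 * ‖u‖ ^ 2 * t)
  have hq_pos : ∀ t, 0 < q t := fun t => by positivity
  have hq : ∀ t, HasDerivAt q (q' t) t := by
    intro t
    have hpoly : q = fun t => 1 + a * (‖h‖ ^ 2 + (2 * ⟪h, u⟫ * t + ‖u‖ ^ 2 * t ^ 2)) := by
      funext t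
      simp only [q, norm_add_sq_real, real_inner_smul_right, norm_smul, Real.norm_eq_abs, mul_pow,
        sq_abs]
      ring
    rw [hpoly]
    refine (((((hasDerivAt_id' t).const_mul _).add ((hasDerivAt_pow 2 t).const_mul _)).const_add
      _).const_mul a).const_add 1 |>.congr_deriv ?_
    simp only [q']
    ring
  have hq' : HasDerivAt q' (a * (2 * ‖u‖ ^ 2)) 0 := by
    simpa using
      (((hasDerivAt_id' (0 : ℝ)).const_mul (2 * ‖u‖ ^ 2)).const_add (2 * ⟪h, u⟫)).const_mul a
  have hg : ∀ t, HasDerivAt (fun t => q t ^ (-δ)) (q' t * -δ * q t ^ (-δ - 1)) t := fun t =>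
    (hq t).rpow_const (Or.inl (hq_pos t).ne')
  have hg' := (hq'.mul_const (-δ)).mul ((hq 0).rpow_const (p := -δ - 1) (Or.inl (hq_pos 0).ne'))
  have := tendsto_second_difference_quotient hg hg'
  simp only [q, q', neg_smul, ← sub_eq_add_neg, zero_smul, add_zero, mul_zero,
    show -δ - 1 - 1 = -δ - 2 by ring] at this
  convert this using 2
  ring

theorem statement_13_general (d : ℕ) (δ : ℝ) (hδ : 0 < δ)
    (a₁ a₂ b₁ b₂ : ℝ) (ha₁ : 0 < a₁) (ha₂ : 0 < a₂) (hb₁ : 0 ≤ b₁) (hb₂ : 0 ≤ b₂)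
    (u : EuclideanSpace ℝ (Fin d)) (hu : ‖u‖ = 1) :
    IsStationaryCovariance d
      (fun h => b₁ * (1 + a₁ * ‖h‖ ^ 2) ^ (-δ) +
        2 * δ * b₂ * (1 + a₂ * ‖h‖ ^ 2) ^ (-δ - 1) -
        4 * δ * (δ + 1) * b₂ * a₂ * (⟪h, u⟫ : ℝ) ^ 2 * (1 + a₂ * ‖h‖ ^ 2) ^ (-δ - 2)) := by
  set C : EuclideanSpace ℝ (Fin d) → ℝ := fun h => (1 + a₂ * ‖h‖ ^ 2) ^ (-δ)
  have hC : IsStationaryCovariance d C := isStationaryCovariance_cauchy hδ ha₂.le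
  have hb₂_part : IsStationaryCovariance d (fun h => 2 * δ * b₂ * (1 + a₂ * ‖h‖ ^ 2) ^ (-δ - 1) -
      4 * δ * (δ + 1) * b₂ * a₂ * ⟪h, u⟫ ^ 2 * (1 + a₂ * ‖h‖ ^ 2) ^ (-δ - 2)) := by
    refine IsStationaryCovariance.of_tendsto (l := 𝓝[>] 0)
      (F := fun ε h => b₂ / (a₂ * ε ^ 2) * (2 * C h - C (h + ε • u) - C (h - ε • u)))
      ?_ fun h => ?_
    · filter_upwards [self_mem_nhdsWithin] with ε (hε : 0 < ε)
      exact (hC.second_difference (ε • u)).const_mul (by positivity)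
    · have := (tendsto_cauchy_second_difference_quotient δ ha₂.le h u).const_mul (-(b₂ / a₂))
      convert this using 2 with ε
      · ring
      · rw [hu]
        field_simp
        ring
  simpa only [add_sub_assoc] using
    ((isStationaryCovariance_cauchy hδ ha₁.le).const_mul hb₁).add hb₂_part

theorem statement_13 (d : ℕ) (hd : 1 ≤ d) (δ : ℝ) (hδ : 0 < δ)
    (a₁ a₂ b₁ b₂ : ℝ) (ha₁ : 0 < a₁) (ha₂ : 0 < a₂) (hb₁ : 0 ≤ b₁) (hb₂ : 0 ≤ b₂)
    (u : EuclideanSpace ℝ (Fin d)) (hu : ‖u‖ = 1) :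
    IsStationaryCovariance d
      (fun h => b₁ * (1 + a₁ * ‖h‖ ^ 2) ^ (-δ) +
        2 * δ * b₂ * (1 + a₂ * ‖h‖ ^ 2) ^ (-δ - 1) -
        4 * δ * (δ + 1) * b₂ * a₂ * (⟪h, u⟫ : ℝ) ^ 2 * (1 + a₂ * ‖h‖ ^ 2) ^ (-δ - 2)) :=
  statement_13_general d δ hδ a₁ a₂ b₁ b₂ ha₁ ha₂ hb₁ hb₂ u hu
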